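/- arXiv:2605.20828 — 2 statements merged into one kernel-verified Lean document; each statement's English description precedes it below -/
import Mathlib

section
/- Let p ≥ 4 be an even integer and let m_r = E|N|^r denote the r-th absolute moment of a standard normal N. Let (ρ_0^{(p)},...,ρ_{p/2}^{(p)}) be the unique solution of the triangular system ρ_0^{(p)} = 1 and Σ_{l=0}^{j} 2^l m_{2j-2l} binom(p-2l, p-2j) ρ_l^{(p)} = 0 for j = 1,...,p/2. Then for every a ≥ 0, b ≥ 0 and x ∈ ℝ, Σ_{l=0}^{p/2} ρ_l^{(p)} E[ |sqrt(a+b) N + x|^{p-2l} ] (2b)^l = E |sqrt(a) N + x|^p, where N ~ N(0,1). -/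
open MeasureTheory ProbabilityTheory Finset

/-- `m r = E|N|^r` for a standard Gaussian `N`. -/
noncomputable def gaussAbsMoment (r : ℕ) : ℝ :=
  ∫ x, |x| ^ r ∂(gaussianReal 0 1)

/-! Odd Gaussian moments vanish, so `E (√c N + x) ^ (2k)` is the polynomial
`gaussMomentPoly k c x = ∑ᵢ C(2k, 2i) m_{2i} cⁱ x^(2(k-i))`.
Since `m_{2i} = (2i)! / (2ⁱ i!)`, these polynomials obey the semigroup law
`P_k(a + b) = ∑ₜ C(2k, 2t) m_{2t} bᵗ P_{k-t}(a)`,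
the algebraic form of `√(a+b) N = √a N + √b N'`.
Substituting it into the left-hand side and collecting powers of `b`, the coefficient of
`bʲ P_{n-j}(a)` (with `p = 2n`) is the left-hand side of the `j`-th equation of the triangular
system: `1` for `j = 0` and `0` otherwise. -/

open Real
open scoped Nat NNReal

lemma integrable_pow_mul_exp_neg_sq_div_two (n : ℕ) :
    Integrable fun x : ℝ => x ^ n * exp (-x ^ 2 / 2) := by
  have h := integrable_rpow_mul_exp_neg_mul_sq (b := 1 / 2) (by norm_num) (s := n)
    (by linarith [(Nat.cast_nonneg n : (0 : ℝ) ≤ n)])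
  refine h.congr (ae_of_all _ fun x => ?_)
  simp only [rpow_natCast]
  ring_nf

lemma integral_pow_add_two_mul_exp_neg_sq_div_two (n : ℕ) :
    ∫ x : ℝ, x ^ (n + 2) * exp (-x ^ 2 / 2) =
      (n + 1) * ∫ x : ℝ, x ^ n * exp (-x ^ 2 / 2) := by
  have hderiv (x : ℝ) : HasDerivAt (fun x : ℝ => x ^ (n + 1) * exp (-x ^ 2 / 2))
      ((n + 1) * (x ^ n * exp (-x ^ 2 / 2)) - x ^ (n + 2) * exp (-x ^ 2 / 2)) x := by
    have hexp : HasDerivAt (fun x : ℝ => exp (-x ^ 2 / 2)) (exp (-x ^ 2 / 2) * (-x)) x := by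
      refine (((hasDerivAt_pow 2 x).fun_neg).div_const 2).exp.congr_deriv ?_
      ring
    refine ((hasDerivAt_pow (n + 1) x).fun_mul hexp).congr_deriv ?_
    push_cast
    ring
  have hint := (integrable_pow_mul_exp_neg_sq_div_two n).const_mul ((n : ℝ) + 1)
  have hzero := integral_eq_zero_of_hasDerivAt_of_integrable hderiv
    (hint.sub (integrable_pow_mul_exp_neg_sq_div_two (n + 2)))
    (integrable_pow_mul_exp_neg_sq_div_two (n + 1))
  rw [integral_sub hint (integrable_pow_mul_exp_neg_sq_div_two (n + 2)), integral_const_mul]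
    at hzero
  linarith

lemma integral_gaussianReal_zero_one (f : ℝ → ℝ) :
    ∫ z, f z ∂gaussianReal 0 1 = (√(2 * π))⁻¹ * ∫ z, f z * exp (-z ^ 2 / 2) := by
  rw [integral_gaussianReal_eq_integral_smul one_ne_zero, ← integral_const_mul]
  congr 1 with z
  simp only [gaussianPDFReal, NNReal.coe_one, mul_one, sub_zero, smul_eq_mul]
  ring

lemma integral_pow_add_two_gaussianReal (n : ℕ) :
    ∫ z, z ^ (n + 2) ∂gaussianReal 0 1 = (n + 1) * ∫ z, z ^ n ∂gaussianReal 0 1 := by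
  simp only [integral_gaussianReal_zero_one, integral_pow_add_two_mul_exp_neg_sq_div_two]
  ring

lemma integral_pow_odd_gaussianReal (v : ℝ≥0) (i : ℕ) :
    ∫ z, z ^ (2 * i + 1) ∂gaussianReal 0 v = 0 := by
  have hsymm : (gaussianReal 0 v).map (fun z => -z) = gaussianReal 0 v := by
    simpa using gaussianReal_map_neg (μ := 0) (v := v)
  have h := integral_map (μ := gaussianReal 0 v) (f := fun z : ℝ => z ^ (2 * i + 1))
    (measurable_neg.aemeasurable) (by fun_prop)
  simp only [hsymm, (odd_two_mul_add_one i).neg_pow, integral_neg] at h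
  linarith

lemma integrable_pow_gaussianReal (μ : ℝ) (v : ℝ≥0) (k : ℕ) :
    Integrable (fun z : ℝ => z ^ k) (gaussianReal μ v) :=
  (memLp_id_gaussianReal k).integrable_norm_pow'.mono' (by fun_prop)
    (ae_of_all _ fun z => by simp)

lemma gaussAbsMoment_two_mul_eq_integral (i : ℕ) :
    gaussAbsMoment (2 * i) = ∫ z, z ^ (2 * i) ∂gaussianReal 0 1 := by
  simp only [gaussAbsMoment, (even_two_mul i).pow_abs]

lemma gaussAbsMoment_two_mul (i : ℕ) :
    gaussAbsMoment (2 * i) = (2 * i)! / (2 ^ i * i !) := by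
  induction i with
  | zero => simp [gaussAbsMoment]
  | succ i ih =>
    rw [gaussAbsMoment_two_mul_eq_integral, mul_add_one, integral_pow_add_two_gaussianReal,
      ← gaussAbsMoment_two_mul_eq_integral, ih]
    push_cast [Nat.factorial_succ, mul_add_one]
    field_simp
    ring

lemma gaussAbsMoment_two_mul_add_mul_choose (s t : ℕ) :
    gaussAbsMoment (2 * (s + t)) * (s + t).choose s =
      (2 * (s + t)).choose (2 * s) * gaussAbsMoment (2 * s) * gaussAbsMoment (2 * t) := by
  rw [gaussAbsMoment_two_mul, gaussAbsMoment_two_mul, gaussAbsMoment_two_mul,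
    Nat.cast_choose ℝ (Nat.le_add_right s t),
    Nat.cast_choose ℝ (by omega : 2 * s ≤ 2 * (s + t)),
    Nat.add_sub_cancel_left, show 2 * (s + t) - 2 * s = 2 * t by omega]
  field_simp
  ring

lemma choose_mul_gaussAbsMoment_mul_choose (k i t : ℕ) (hti : t ≤ i) :
    ((2 * k).choose (2 * i) : ℝ) * gaussAbsMoment (2 * i) * i.choose t =
      (2 * k).choose (2 * t) * gaussAbsMoment (2 * t) *
        ((2 * (k - t)).choose (2 * (i - t)) * gaussAbsMoment (2 * (i - t))) := by
  obtain ⟨s, rfl⟩ := Nat.exists_eq_add_of_le hti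
  have hmoment := gaussAbsMoment_two_mul_add_mul_choose t s
  have hchoose : ((2 * k).choose (2 * (t + s)) : ℝ) * (2 * (t + s)).choose (2 * t) =
      (2 * k).choose (2 * t) * (2 * (k - t)).choose (2 * s) := by
    rw [← Nat.cast_mul, Nat.choose_mul (by omega), Nat.mul_sub, Nat.mul_add,
      Nat.add_sub_cancel_left, Nat.cast_mul]
  rw [Nat.add_sub_cancel_left]
  linear_combination ((2 * k).choose (2 * (t + s)) : ℝ) * hmoment +
    gaussAbsMoment (2 * t) * gaussAbsMoment (2 * s) * hchoose

lemma sum_range_two_mul_add_one_of_odd_eq_zero {M : Type*} [AddCommMonoid M] (n : ℕ)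
    (f : ℕ → M) (hf : ∀ i, f (2 * i + 1) = 0) :
    ∑ k ∈ range (2 * n + 1), f k = ∑ i ∈ range (n + 1), f (2 * i) := by
  induction n with
  | zero => simp
  | succ n ih =>
    rw [show 2 * (n + 1) + 1 = 2 * n + 1 + 1 + 1 by ring, sum_range_succ, sum_range_succ, ih, hf,
      add_zero, sum_range_succ _ (n + 1), show 2 * n + 1 + 1 = 2 * (n + 1) by ring]

lemma integral_mul_add_pow_gaussianReal (μ : ℝ) (v : ℝ≥0) (σ x : ℝ) (n : ℕ) :
    ∫ z, (σ * z + x) ^ n ∂gaussianReal μ v =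
      ∑ k ∈ range (n + 1),
        (n.choose k : ℝ) * σ ^ k * x ^ (n - k) * ∫ z, z ^ k ∂gaussianReal μ v := by
  simp_rw [add_pow, mul_pow]
  rw [integral_finsetSum _ fun k _ =>
    (((integrable_pow_gaussianReal μ v k).const_mul _).mul_const _).mul_const _]
  refine sum_congr rfl fun k _ => ?_
  rw [integral_mul_const, integral_mul_const, integral_const_mul]
  ring

noncomputable def gaussMomentPoly (k : ℕ) (c x : ℝ) : ℝ :=
  ∑ i ∈ range (k + 1),
    ((2 * k).choose (2 * i) : ℝ) * gaussAbsMoment (2 * i) * c ^ i * x ^ (2 * (k - i))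

lemma integral_abs_sqrt_mul_add_pow_two_mul {c : ℝ} (hc : 0 ≤ c) (x : ℝ) (k : ℕ) :
    ∫ z, |√c * z + x| ^ (2 * k) ∂gaussianReal 0 1 = gaussMomentPoly k c x := by
  simp only [(even_two_mul k).pow_abs]
  rw [integral_mul_add_pow_gaussianReal, sum_range_two_mul_add_one_of_odd_eq_zero _ _
    fun i => by rw [integral_pow_odd_gaussianReal, mul_zero]]
  refine sum_congr rfl fun i _ => ?_
  rw [← gaussAbsMoment_two_mul_eq_integral, pow_mul, sq_sqrt hc,
    show 2 * k - 2 * i = 2 * (k - i) by omega]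
  ring

lemma gaussMomentPoly_add (k : ℕ) (a b x : ℝ) :
    gaussMomentPoly k (a + b) x = ∑ t ∈ range (k + 1),
      ((2 * k).choose (2 * t) : ℝ) * gaussAbsMoment (2 * t) * b ^ t *
        gaussMomentPoly (k - t) a x := by
  let term (t s : ℕ) : ℝ := (2 * k).choose (2 * t) * gaussAbsMoment (2 * t) * b ^ t *
    ((2 * (k - t)).choose (2 * s) * gaussAbsMoment (2 * s) * a ^ s * x ^ (2 * (k - t - s)))
  calc gaussMomentPoly k (a + b) x
      = ∑ i ∈ range (k + 1), ∑ t ∈ range (i + 1), term t (i - t) := by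
        refine sum_congr rfl fun i _ => ?_
        rw [add_comm a b, add_pow, mul_sum, sum_mul]
        refine sum_congr rfl fun t ht => ?_
        have hti : t ≤ i := Nat.lt_succ_iff.mp (mem_range.mp ht)
        simp only [term]
        rw [show k - t - (i - t) = k - i by omega]
        linear_combination b ^ t * a ^ (i - t) * x ^ (2 * (k - i)) *
          choose_mul_gaussAbsMoment_mul_choose k i t hti
    _ = ∑ t ∈ range (k + 1), ∑ s ∈ range (k + 1 - t), term t s := sum_range_diag_flip _ _
    _ = _ := by
        refine sum_congr rfl fun t ht => ?_
        have htk : t ≤ k := Nat.lt_succ_iff.mp (mem_range.mp ht)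
        rw [gaussMomentPoly, mul_sum, show k - t + 1 = k + 1 - t by omega]

lemma sum_mul_gaussMomentPoly_add (n : ℕ) (ρ : ℕ → ℝ) (a b x : ℝ) :
    ∑ l ∈ range (n + 1), ρ l * gaussMomentPoly (n - l) (a + b) x * (2 * b) ^ l =
      ∑ j ∈ range (n + 1),
        (∑ l ∈ range (j + 1), (2 : ℝ) ^ l * gaussAbsMoment (2 * j - 2 * l) *
          ((2 * n - 2 * l).choose (2 * n - 2 * j) : ℝ) * ρ l) * b ^ j *
        gaussMomentPoly (n - j) a x := by
  let term (l t : ℕ) : ℝ := ρ l * ((2 * (n - l)).choose (2 * t) * gaussAbsMoment (2 * t) *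
    b ^ t * gaussMomentPoly (n - l - t) a x) * (2 * b) ^ l
  calc _ = ∑ l ∈ range (n + 1), ∑ t ∈ range (n + 1 - l), term l t := by
        refine sum_congr rfl fun l hl => ?_
        have hln : l ≤ n := Nat.lt_succ_iff.mp (mem_range.mp hl)
        rw [gaussMomentPoly_add, show n - l + 1 = n + 1 - l by omega, mul_sum, sum_mul]
    _ = ∑ j ∈ range (n + 1), ∑ l ∈ range (j + 1), term l (j - l) :=
        (sum_range_diag_flip _ _).symm
    _ = _ := by
        refine sum_congr rfl fun j hj => ?_
        rw [sum_mul, sum_mul]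
        refine sum_congr rfl fun l hl => ?_
        have hlj : l ≤ j := Nat.lt_succ_iff.mp (mem_range.mp hl)
        have hjn : j ≤ n := Nat.lt_succ_iff.mp (mem_range.mp hj)
        simp only [term]
        rw [show n - l - (j - l) = n - j by omega, show 2 * (j - l) = 2 * j - 2 * l by omega,
          show 2 * (n - l) = 2 * n - 2 * l by omega,
          Nat.choose_symm_of_eq_add
            (show 2 * n - 2 * l = 2 * j - 2 * l + (2 * n - 2 * j) by omega),
          show b ^ j = b ^ l * b ^ (j - l) by rw [← pow_add, Nat.add_sub_cancel' hlj]]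
        ring

theorem noise_correction_identity_general (p : ℕ) (hpe : Even p)
    (ρ : ℕ → ℝ) (hρ0 : ρ 0 = 1)
    (hsys : ∀ j, 1 ≤ j → j ≤ p / 2 →
      ∑ l ∈ range (j + 1),
        (2 : ℝ) ^ l * gaussAbsMoment (2 * j - 2 * l) *
          ((p - 2 * l).choose (p - 2 * j) : ℝ) * ρ l = 0) :
    ∀ a b : ℝ, 0 ≤ a → 0 ≤ b → ∀ x : ℝ,
      ∑ l ∈ range (p / 2 + 1),
        ρ l * (∫ z, |Real.sqrt (a + b) * z + x| ^ (p - 2 * l) ∂(gaussianReal 0 1)) *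
          (2 * b) ^ l
      = ∫ z, |Real.sqrt a * z + x| ^ p ∂(gaussianReal 0 1) := by
  obtain ⟨n, rfl⟩ := hpe
  rw [← two_mul, Nat.mul_div_cancel_left n two_pos] at hsys ⊢
  intro a b ha hb x
  calc _ = ∑ l ∈ range (n + 1), ρ l * gaussMomentPoly (n - l) (a + b) x * (2 * b) ^ l := by
        refine sum_congr rfl fun l _ => ?_
        rw [← Nat.mul_sub, integral_abs_sqrt_mul_add_pow_two_mul (by positivity)]
    _ = gaussMomentPoly n a x := by
        rw [sum_mul_gaussMomentPoly_add, sum_eq_single_of_mem 0 (by simp) fun j hj hj0 => by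
          rw [hsys j (Nat.one_le_iff_ne_zero.mpr hj0) (Nat.lt_succ_iff.mp (mem_range.mp hj)),
            zero_mul, zero_mul]]
        simp [hρ0, gaussAbsMoment]
    _ = _ := (integral_abs_sqrt_mul_add_pow_two_mul ha x n).symm

/-- Noise-correction identity with a deterministic shift. -/
theorem noise_correction_identity (p : ℕ) (hp : 4 ≤ p) (hpe : Even p)
    (ρ : ℕ → ℝ) (hρ0 : ρ 0 = 1)
    (hsys : ∀ j, 1 ≤ j → j ≤ p / 2 →
      ∑ l ∈ range (j + 1),
        (2 : ℝ) ^ l * gaussAbsMoment (2 * j - 2 * l) *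
          ((p - 2 * l).choose (p - 2 * j) : ℝ) * ρ l = 0) :
    ∀ a b : ℝ, 0 ≤ a → 0 ≤ b → ∀ x : ℝ,
      ∑ l ∈ range (p / 2 + 1),
        ρ l * (∫ z, |Real.sqrt (a + b) * z + x| ^ (p - 2 * l) ∂(gaussianReal 0 1)) *
          (2 * b) ^ l
      = ∫ z, |Real.sqrt a * z + x| ^ p ∂(gaussianReal 0 1) :=
  noise_correction_identity_general p hpe ρ hρ0 hsys
end

section
/- Let w(u) = sin(πu) on [0,1] and define L(q) = log ∫_0^1 w(u)^q du for q > 0. Then L is strictly convex on (0,∞), and for every p > 2 and every a > 1, the map a ↦ (1/2) L(2a) - (1/p) L(pa) is strictly decreasing; consequently, setting g = w and h = w^a with a > 1, the ratio γ'' = ( (∫_0^1 g^2)^{p/2} / ∫_0^1 g^p ) * ( ∫_0^1 h^p / (∫_0^1 h^2)^{p/2} ) satisfies γ'' > 1. -/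
open Real Set

/-- `L q = log ∫_0^1 sin(πu)^q du`. -/
noncomputable def sinLogMoment (q : ℝ) : ℝ :=
  Real.log (∫ u in (0:ℝ)..1, Real.sin (π * u) ^ q)

/-- `φ̄(q) = ∫_0^1 |φ(u)|^q du` for the weight `w^a` with `w(u) = sin(πu)`:
this is `∫_0^1 sin(πu)^(a q) du`. -/
noncomputable def sinPowMoment (a q : ℝ) : ℝ :=
  ∫ u in (0:ℝ)..1, Real.sin (π * u) ^ (a * q)

/-!
Hölder's inequality `∫ w^(t x + s y) ≤ (∫ w^x)^t (∫ w^y)^s` makes `L` convex, and convexity is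
strict as soon as it is strict at midpoints; there it is Cauchy–Schwarz for `w^(x/2)` and
`w^(y/2)`, which are not proportional because `w` takes both values `1` and `1/2`.
For strictly convex `L` the slope over `[2a, 2b]` is smaller than the slope over `[pa, pb]`,
which is the monotonicity of `F a = L(2a)/2 - L(pa)/p`; finally `log γ'' = p (F 1 - F a) > 0`.
-/

open MeasureTheory

theorem ConvexOn.strictConvexOn_of_midpoint_lt {E : Type*} [AddCommGroup E] [Module ℝ E]
    {s : Set E} {f : E → ℝ} (hf : ConvexOn ℝ s f)
    (hmid : ∀ x ∈ s, ∀ y ∈ s, x ≠ y → f (midpoint ℝ x y) < (f x + f y) / 2) :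
    StrictConvexOn ℝ s f := by
  have key : ∀ x ∈ s, ∀ y ∈ s, x ≠ y → ∀ a b : ℝ, 0 < b → b ≤ a → a + b = 1 →
      f (a • x + b • y) < a * f x + b * f y := by
    intro x hx y hy hxy a b hb hba hab
    have hcomb : a • x + b • y = (a - b) • x + (2 * b) • midpoint ℝ x y := by
      rw [midpoint_eq_smul_add, invOf_eq_inv]; module
    calc f (a • x + b • y) ≤ (a - b) * f x + (2 * b) * f (midpoint ℝ x y) := by
          rw [hcomb]
          exact hf.2 hx (hf.1.midpoint_mem hx hy) (by linarith) (by linarith) (by linarith)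
      _ < (a - b) * f x + (2 * b) * ((f x + f y) / 2) := by
          gcongr; exact hmid x hx y hy hxy
      _ = a * f x + b * f y := by ring
  refine ⟨hf.1, fun x hx y hy hxy a b ha hb hab => ?_⟩
  rcases le_total b a with hba | hab'
  · exact key x hx y hy hxy a b hb hba hab
  · rw [add_comm (a • x), add_comm (a • f x)]
    exact key y hy x hx hxy.symm b a ha hab' (by linarith)

theorem StrictConvexOn.strictAntiOn_one_div_mul_comp_mul_sub {f : ℝ → ℝ}
    (hf : StrictConvexOn ℝ (Ioi 0) f) {α β : ℝ} (hα : 0 < α) (hαβ : α < β) :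
    StrictAntiOn (fun a => (1 / α) * f (α * a) - (1 / β) * f (β * a)) (Ioi 0) := by
  intro a (ha : 0 < a) b (hb : 0 < b) hab
  have hβ : 0 < β := hα.trans hαβ
  have hslope :
      (f (α * b) - f (α * a)) / α / (b - a) < (f (β * b) - f (β * a)) / β / (b - a) := by
    simp only [div_div, mul_sub]
    calc _ < (f (β * b) - f (α * a)) / (β * b - α * a) :=
          hf.secant_strict_mono_aux2 (show 0 < α * a by positivity)
            (show 0 < β * b by positivity) (by gcongr) (by gcongr)
      _ < _ := hf.secant_strict_mono_aux3 (show 0 < α * a by positivity)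
            (show 0 < β * b by positivity) (by gcongr) (by gcongr)
  have := (div_lt_div_iff_of_pos_right (sub_pos.2 hab)).1 hslope
  simp only [one_div_mul_eq_div]
  rw [sub_div, sub_div] at this
  linarith

section LogConvexity

variable {α : Type*} [MeasurableSpace α] {μ : Measure α} {f : α → ℝ}

theorem memLp_rpow_mul_of_integrable_rpow (hf : 0 ≤ᵐ[μ] f) (hfm : AEMeasurable f μ)
    {t x : ℝ} (ht : 0 < t) (hx : Integrable (fun a => f a ^ x) μ) :
    MemLp (fun a => f a ^ (t * x)) (ENNReal.ofReal (1 / t)) μ := by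
  have hm : AEStronglyMeasurable (fun a => f a ^ (t * x)) μ :=
    (hfm.pow_const _).aestronglyMeasurable
  rw [← integrable_norm_rpow_iff hm (by simpa using ht) ENNReal.ofReal_ne_top,
    ENNReal.toReal_ofReal (by positivity)]
  refine hx.congr ?_
  filter_upwards [hf] with a ha
  rw [Real.norm_of_nonneg (Real.rpow_nonneg ha _), ← Real.rpow_mul ha]
  field_simp

theorem integral_rpow_mul_add_mul_le (hf : 0 ≤ᵐ[μ] f) (hfm : AEMeasurable f μ)
    {x y t s : ℝ} (hx : 0 ≤ x) (hy : 0 ≤ y) (ht : 0 < t) (hs : 0 < s) (hts : t + s = 1)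
    (hfx : Integrable (fun a => f a ^ x) μ) (hfy : Integrable (fun a => f a ^ y) μ) :
    ∫ a, f a ^ (t * x + s * y) ∂μ ≤ (∫ a, f a ^ x ∂μ) ^ t * (∫ a, f a ^ y ∂μ) ^ s := by
  have hconj : (1 / t).HolderConjugate (1 / s) := by
    rw [Real.holderConjugate_iff, one_div, one_div, inv_inv, inv_inv, one_lt_inv₀ ht]
    exact ⟨by linarith, hts⟩
  have hnonneg : ∀ c : ℝ, 0 ≤ᵐ[μ] fun a => f a ^ c := fun c => by
    filter_upwards [hf] with a ha using Real.rpow_nonneg ha c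
  have holder := integral_mul_le_Lp_mul_Lq_of_nonneg hconj (hnonneg _) (hnonneg _)
    (memLp_rpow_mul_of_integrable_rpow hf hfm ht hfx)
    (memLp_rpow_mul_of_integrable_rpow hf hfm hs hfy)
  have hsplit : ∫ a, f a ^ (t * x + s * y) ∂μ = ∫ a, f a ^ (t * x) * f a ^ (s * y) ∂μ := by
    refine integral_congr_ae ?_
    filter_upwards [hf] with a ha
    exact Real.rpow_add_of_nonneg ha (by positivity) (by positivity)
  have hunscale : ∀ {c r : ℝ}, 0 < r →
      ∫ a, (f a ^ (r * c)) ^ (1 / r) ∂μ = ∫ a, f a ^ c ∂μ := fun {c r} hr => by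
    refine integral_congr_ae ?_
    filter_upwards [hf] with a ha
    rw [← Real.rpow_mul ha]
    field_simp
  rwa [hunscale ht, hunscale hs, one_div_one_div, one_div_one_div, ← hsplit] at holder

theorem convexOn_log_integral_rpow (hf : 0 ≤ᵐ[μ] f) (hfm : AEMeasurable f μ)
    (hint : ∀ q : ℝ, 0 < q → Integrable (fun a => f a ^ q) μ)
    (hpos : ∀ q : ℝ, 0 < q → 0 < ∫ a, f a ^ q ∂μ) :
    ConvexOn ℝ (Ioi (0 : ℝ)) fun q => Real.log (∫ a, f a ^ q ∂μ) := by
  refine ⟨convex_Ioi 0, fun x (hx : 0 < x) y (hy : 0 < y) t s ht hs hts => ?_⟩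
  simp only [smul_eq_mul]
  rcases ht.eq_or_lt with rfl | ht
  · simp [show s = 1 by linarith]
  rcases hs.eq_or_lt with rfl | hs
  · simp [show t = 1 by linarith]
  calc Real.log (∫ a, f a ^ (t * x + s * y) ∂μ)
      ≤ Real.log ((∫ a, f a ^ x ∂μ) ^ t * (∫ a, f a ^ y ∂μ) ^ s) :=
        Real.log_le_log (hpos _ (by positivity)) (integral_rpow_mul_add_mul_le hf hfm hx.le hy.le
          ht hs hts (hint x hx) (hint y hy))
    _ = t * Real.log (∫ a, f a ^ x ∂μ) + s * Real.log (∫ a, f a ^ y ∂μ) := by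
        rw [Real.log_mul (by have := hpos x hx; positivity) (by have := hpos y hy; positivity),
          Real.log_rpow (hpos x hx), Real.log_rpow (hpos y hy)]

end LogConvexity

theorem intervalIntegral.integral_mul_sq_lt_of_not_proportional {u v : ℝ → ℝ} {a b : ℝ}
    (hab : a < b) (hu : ContinuousOn u (Icc a b)) (hv : ContinuousOn v (Icc a b))
    (hu0 : ∃ x ∈ Icc a b, u x ≠ 0) (huv : ∀ c : ℝ, ∃ x ∈ Icc a b, v x ≠ c * u x) :
    (∫ x in a..b, u x * v x) ^ 2 < (∫ x in a..b, u x ^ 2) * ∫ x in a..b, v x ^ 2 := by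
  have hsq_pos : ∀ {g : ℝ → ℝ}, ContinuousOn g (Icc a b) → (∃ x ∈ Icc a b, g x ≠ 0) →
      0 < ∫ x in a..b, g x ^ 2 := fun hg ⟨x, hx, hgx⟩ =>
    intervalIntegral.integral_pos hab (hg.pow 2) (fun _ _ => sq_nonneg _) ⟨x, hx, by positivity⟩
  have hint : ∀ {g : ℝ → ℝ}, ContinuousOn g (Icc a b) → IntervalIntegrable g volume a b :=
    fun hg => hg.intervalIntegrable_of_Icc hab.le
  set A := ∫ x in a..b, u x ^ 2
  set M := ∫ x in a..b, u x * v x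
  set B := ∫ x in a..b, v x ^ 2
  have hA : 0 < A := hsq_pos hu hu0
  have hexpand : ∫ x in a..b, (A * v x - M * u x) ^ 2 = A * (A * B - M ^ 2) := by
    have hpt : (fun x => (A * v x - M * u x) ^ 2)
        = fun x => A ^ 2 * v x ^ 2 - 2 * A * M * (u x * v x) + M ^ 2 * u x ^ 2 := by
      funext x; ring
    rw [hpt, intervalIntegral.integral_add, intervalIntegral.integral_sub,
      intervalIntegral.integral_const_mul, intervalIntegral.integral_const_mul,
      intervalIntegral.integral_const_mul]
    · ring
    all_goals exact hint (by fun_prop)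
  obtain ⟨x, hx, hvx⟩ := huv (M / A)
  have hpos := hsq_pos (g := fun x => A * v x - M * u x) (by fun_prop) ⟨x, hx, by
    rw [show A * v x - M * u x = A * (v x - M / A * u x) by field_simp]
    exact mul_ne_zero hA.ne' (sub_ne_zero.2 hvx)⟩
  rw [hexpand] at hpos
  nlinarith [(mul_pos_iff_of_pos_left hA).1 hpos]

theorem sin_pi_mul_nonneg_of_mem_Icc {u : ℝ} (hu : u ∈ Icc (0 : ℝ) 1) : 0 ≤ sin (π * u) :=
  sin_nonneg_of_nonneg_of_le_pi (by nlinarith [hu.1, pi_pos]) (by nlinarith [hu.2, pi_pos])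

theorem continuous_sin_pi_mul_rpow {q : ℝ} (hq : 0 ≤ q) :
    Continuous fun u : ℝ => sin (π * u) ^ q :=
  (continuous_sin.comp (continuous_const_mul π)).rpow_const fun _ => Or.inr hq

theorem sinPowMoment_eq_sinPowMoment_one (a q : ℝ) :
    sinPowMoment a q = sinPowMoment 1 (a * q) := by
  rw [sinPowMoment, sinPowMoment, one_mul]

theorem sinPowMoment_one_eq_setIntegral (q : ℝ) :
    sinPowMoment 1 q = ∫ u in Ioc (0 : ℝ) 1, sin (π * u) ^ q := by
  rw [sinPowMoment, one_mul, intervalIntegral.integral_of_le zero_le_one]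

theorem sinLogMoment_eq_log (q : ℝ) : sinLogMoment q = Real.log (sinPowMoment 1 q) := by
  rw [sinLogMoment, sinPowMoment, one_mul]

theorem sinPowMoment_pos {a q : ℝ} (h : 0 ≤ a * q) : 0 < sinPowMoment a q :=
  intervalIntegral.intervalIntegral_pos_of_pos_on
    ((continuous_sin_pi_mul_rpow h).intervalIntegrable 0 1)
    (fun u hu => rpow_pos_of_pos (sin_pos_of_pos_of_lt_pi (by nlinarith [hu.1, pi_pos])
      (by nlinarith [hu.2, pi_pos])) _) zero_lt_one

theorem sinPowMoment_eq_exp {a q : ℝ} (h : 0 ≤ a * q) :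
    sinPowMoment a q = exp (sinLogMoment (a * q)) := by
  rw [sinLogMoment_eq_log, ← sinPowMoment_eq_sinPowMoment_one, exp_log (sinPowMoment_pos h)]

theorem sinPowMoment_one_midpoint_sq_lt {x y : ℝ} (hx : 0 ≤ x) (hy : 0 ≤ y) (hxy : x ≠ y) :
    sinPowMoment 1 ((x + y) / 2) ^ 2 < sinPowMoment 1 x * sinPowMoment 1 y := by
  have hsin_half : sin (π * (1 / 2)) = 1 := by rw [mul_one_div, sin_pi_div_two]
  have hsin_sixth : sin (π * (1 / 6)) = 1 / 2 := by rw [mul_one_div, sin_pi_div_six]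
  have hcs := intervalIntegral.integral_mul_sq_lt_of_not_proportional zero_lt_one
    (u := fun u => sin (π * u) ^ (x / 2)) (v := fun u => sin (π * u) ^ (y / 2))
    (continuous_sin_pi_mul_rpow (by positivity)).continuousOn
    (continuous_sin_pi_mul_rpow (by positivity)).continuousOn
    ⟨1 / 2, by norm_num, by simp only [hsin_half, one_rpow]; exact one_ne_zero⟩ fun c => by
      -- `sin (π / 2) = 1` forces `c = 1`, and then `sin (π / 6) = 1 / 2` forces `x = y`
      by_cases hc : c = 1
      · refine ⟨1 / 6, by norm_num, ?_⟩
        simp only [hc, one_mul, hsin_sixth]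
        rw [Ne, rpow_right_inj (by norm_num) (by norm_num)]
        contrapose! hxy
        linarith
      · exact ⟨1 / 2, by norm_num, by simp only [hsin_half, one_rpow, mul_one]; exact Ne.symm hc⟩
  have hpow : ∀ r s : ℝ, 0 ≤ r → 0 ≤ s → ∫ u in (0 : ℝ)..1, sin (π * u) ^ r * sin (π * u) ^ s
      = sinPowMoment 1 (r + s) := fun r s hr hs => by
    rw [sinPowMoment, one_mul]
    refine intervalIntegral.integral_congr fun u hu => ?_
    rw [uIcc_of_le zero_le_one] at hu
    exact (rpow_add_of_nonneg (sin_pi_mul_nonneg_of_mem_Icc hu) hr hs).symm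
  simp only [sq] at hcs
  rwa [hpow _ _ (by positivity) (by positivity), hpow _ _ (by positivity) (by positivity),
    hpow _ _ (by positivity) (by positivity), add_halves, add_halves, ← sq,
    show x / 2 + y / 2 = (x + y) / 2 by ring] at hcs

theorem convexOn_sinLogMoment : ConvexOn ℝ (Ioi (0 : ℝ)) sinLogMoment := by
  have hnonneg : 0 ≤ᵐ[volume.restrict (Ioc (0 : ℝ) 1)] fun u => sin (π * u) :=
    ae_restrict_of_forall_mem measurableSet_Ioc fun u hu =>
      sin_pi_mul_nonneg_of_mem_Icc (Ioc_subset_Icc_self hu)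
  convert convexOn_log_integral_rpow hnonneg (by fun_prop)
    (fun q hq => (continuous_sin_pi_mul_rpow hq.le).integrableOn_Ioc)
    (fun q hq => sinPowMoment_one_eq_setIntegral q ▸ sinPowMoment_pos (by linarith))
    using 2 with q
  rw [sinLogMoment_eq_log, sinPowMoment_one_eq_setIntegral]

theorem strictConvexOn_sinLogMoment : StrictConvexOn ℝ (Ioi (0 : ℝ)) sinLogMoment := by
  refine convexOn_sinLogMoment.strictConvexOn_of_midpoint_lt
    fun x (hx : 0 < x) y (hy : 0 < y) hxy => ?_
  have hmid := sinPowMoment_one_midpoint_sq_lt hx.le hy.le hxy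
  have hlog := Real.log_lt_log (pow_pos (sinPowMoment_pos (by positivity)) 2) hmid
  rw [Real.log_pow, Real.log_mul (sinPowMoment_pos (by positivity)).ne'
    (sinPowMoment_pos (by positivity)).ne'] at hlog
  rw [midpoint_eq_smul_add, smul_eq_mul, invOf_eq_inv, sinLogMoment_eq_log, sinLogMoment_eq_log,
    sinLogMoment_eq_log, inv_mul_eq_div]
  push_cast at hlog
  linarith

theorem sinPowMoment_ratio_eq_exp {p a : ℝ} (hp : 0 < p) (ha : 0 ≤ a) :
    (sinPowMoment 1 2) ^ (p / 2) / sinPowMoment 1 p *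
        (sinPowMoment a p / (sinPowMoment a 2) ^ (p / 2)) =
      exp (p * (((1 / 2) * sinLogMoment (2 * 1) - (1 / p) * sinLogMoment (p * 1)) -
        ((1 / 2) * sinLogMoment (2 * a) - (1 / p) * sinLogMoment (p * a)))) := by
  rw [sinPowMoment_eq_exp (by positivity), sinPowMoment_eq_exp (by positivity),
    sinPowMoment_eq_exp (by positivity), sinPowMoment_eq_exp (by positivity),
    ← exp_mul, ← exp_mul, ← exp_sub, ← exp_sub, ← exp_add]
  congr 1
  field_simp
  ring_nf

/-- Strict convexity of `L`, monotonicity of the calibration map, and `γ'' > 1`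
for `g = w`, `h = w^a`, `a > 1`. -/
theorem sin_weight_calibration :
    StrictConvexOn ℝ (Set.Ioi (0:ℝ)) sinLogMoment ∧
    (∀ p : ℝ, 2 < p →
      StrictAntiOn (fun a : ℝ => (1/2) * sinLogMoment (2 * a) - (1/p) * sinLogMoment (p * a))
        (Set.Ici (1:ℝ))) ∧
    (∀ p : ℝ, 2 < p → ∀ a : ℝ, 1 < a →
      1 < (sinPowMoment 1 2) ^ (p / 2) / sinPowMoment 1 p *
            (sinPowMoment a p / (sinPowMoment a 2) ^ (p / 2))) := by
  have hanti : ∀ p : ℝ, 2 < p →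
      StrictAntiOn (fun a : ℝ => (1/2) * sinLogMoment (2 * a) - (1/p) * sinLogMoment (p * a))
        (Set.Ici (1:ℝ)) := fun p hp =>
    (strictConvexOn_sinLogMoment.strictAntiOn_one_div_mul_comp_mul_sub two_pos hp).mono
      (Ici_subset_Ioi.2 one_pos)
  refine ⟨strictConvexOn_sinLogMoment, hanti, fun p hp a ha => ?_⟩
  rw [sinPowMoment_ratio_eq_exp (by linarith) (by linarith), one_lt_exp_iff]
  exact mul_pos (by linarith) (sub_pos.2 (hanti p hp self_mem_Ici ha.le ha))
end
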